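/- arXiv:1907.05835 — 2 statements merged into one kernel-verified Lean document; each statement's English description precedes it below -/
import Mathlib

section
/- Let x, y ∈ 𝒞 with x ≠ y and let k be the first index where they differ. For any finite nonempty F ⊆ ℕ with max F > k: (∏_{m∈F} u_m)(x) - (∏_{m∈F} u_m)(y) = 0 if and only if (∏_{m∈F△{k}} u_m)(x) - (∏_{m∈F△{k}} u_m)(y) ∈ {-2,2}, where △ denotes symmetric difference. -/
open scoped ENNReal

abbrev Cantor : Type := ℕ → Fin 2

noncomputable def u (n : ℕ) (x : Cantor) : ℂ := 2 * ((x n : ℕ) : ℂ) - 1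

noncomputable def firstDiff (x y : Cantor) (h : x ≠ y) : ℕ :=
  Nat.find (Function.ne_iff.mp h)

open Classical in
noncomputable def dC (x y : Cantor) : ℝ≥0∞ :=
  if h : x = y then 0 else 2⁻¹ ^ firstDiff x y h

noncomputable def LipC (f : Cantor → ℂ) : ℝ≥0∞ :=
  ⨆ (x : Cantor) (y : Cantor) (_ : x ≠ y),
    ENNReal.ofReal (‖f x - f y‖) / dC x y

/-! Write `k` for the first index where `x` and `y` differ and `P z = ∏ m ∈ F, u m z`.
Since `u k z ^ 2 = 1`, the product over `F ∆ {k}` is `u k z * P z`; with `u k y = -u k x` the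
right-hand side becomes `u k x * (P x + P y)`. As `P x, P y, u k x ∈ {1, -1}`, this lies in
`{-2, 2}` exactly when `P x = P y`. -/

theorem u_mul_self (n : ℕ) (z : Cantor) : u n z * u n z = 1 := by
  rcases Fin.exists_fin_two.mp ⟨z n, rfl⟩ with hz | hz <;> norm_num [u, hz]

theorem u_firstDiff_right {x y : Cantor} (h : x ≠ y) :
    u (firstDiff x y h) y = -u (firstDiff x y h) x := by
  have hxy : x (firstDiff x y h) ≠ y (firstDiff x y h) := Nat.find_spec (Function.ne_iff.mp h)
  revert hxy
  rcases Fin.exists_fin_two.mp ⟨x (firstDiff x y h), rfl⟩ with hx | hx <;>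
    rcases Fin.exists_fin_two.mp ⟨y (firstDiff x y h), rfl⟩ with hy | hy <;>
    norm_num [u, hx, hy]

theorem prod_u_mul_self (F : Finset ℕ) (z : Cantor) :
    (∏ m ∈ F, u m z) * ∏ m ∈ F, u m z = 1 :=
  Finset.prod_induction _ (fun a => a * a = 1)
    (fun a b ha hb => by rw [mul_mul_mul_comm, ha, hb, one_mul]) (one_mul 1)
    (fun m _ => u_mul_self m z)

theorem Finset.prod_symmDiff_singleton {ι M : Type*} [DecidableEq ι] [CommMonoid M]
    (s : Finset ι) {i : ι} {f : ι → M} (hi : f i * f i = 1) :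
    ∏ m ∈ symmDiff s {i}, f m = f i * ∏ m ∈ s, f m := by
  by_cases hs : i ∈ s
  · have hsd : symmDiff s {i} = s.erase i := by
      ext m
      simp only [mem_symmDiff, mem_singleton, mem_erase]
      grind
    rw [hsd, ← mul_prod_erase s f hs, ← mul_assoc, hi, one_mul]
  · have hsd : symmDiff s {i} = insert i s := by
      ext m
      simp only [mem_symmDiff, mem_singleton, mem_insert]
      grind
    rw [hsd, prod_insert hs]

theorem sub_eq_zero_iff_mul_sub_neg_mul_mem {K : Type*} [Field K] [CharZero K] {a b c : K}
    (ha : a * a = 1) (hb : b * b = 1) (hc : c * c = 1) :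
    a - b = 0 ↔ c * a - -c * b ∈ ({-2, 2} : Set K) := by
  rcases mul_self_eq_one_iff.mp ha with rfl | rfl <;>
    rcases mul_self_eq_one_iff.mp hb with rfl | rfl <;>
    rcases mul_self_eq_one_iff.mp hc with rfl | rfl <;>
    norm_num

theorem prod_u_sub_eq_zero_iff_symmDiff_general (x y : Cantor) (h : x ≠ y)
    (F : Finset ℕ) :
    (∏ m ∈ F, u m x) - (∏ m ∈ F, u m y) = 0 ↔
      (∏ m ∈ symmDiff F {firstDiff x y h}, u m x) -
        (∏ m ∈ symmDiff F {firstDiff x y h}, u m y) ∈ ({-2, 2} : Set ℂ) := by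
  rw [F.prod_symmDiff_singleton (u_mul_self _ x), F.prod_symmDiff_singleton (u_mul_self _ y),
    u_firstDiff_right h]
  exact sub_eq_zero_iff_mul_sub_neg_mul_mem (prod_u_mul_self F x) (prod_u_mul_self F y)
    (u_mul_self _ x)

theorem prod_u_sub_eq_zero_iff_symmDiff (x y : Cantor) (h : x ≠ y)
    (F : Finset ℕ) (hF : F.Nonempty) (hmax : firstDiff x y h < F.max' hF) :
    (∏ m ∈ F, u m x) - (∏ m ∈ F, u m y) = 0 ↔
      (∏ m ∈ symmDiff F {firstDiff x y h}, u m x) -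
        (∏ m ∈ symmDiff F {firstDiff x y h}, u m y) ∈ ({-2, 2} : Set ℂ) :=
  prod_u_sub_eq_zero_iff_symmDiff_general x y h F
end

section
/- Let f : 𝒞 → ℂ be given by f = α_0 u_0 + α_1 u_1 + α_2 u_0 u_1 with α_0, α_1, α_2 ∈ ℂ. Then the Lipschitz seminorm of f with respect to the Cantor metric equals max{2|α_0-α_2|, 2|α_0-α_1|, 2|α_0+α_1|, 2|α_0+α_2|, 4|α_1-α_2|, 4|α_1+α_2|}. -/
open scoped ENNReal

/-!
Two points at distance 1 differ at coordinate 0, two points at distance 1/2 agree at coordinate 0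
and differ at coordinate 1, and a function of the first two coordinates takes the same value at
points closer than that. So its Lipschitz seminorm is the largest of the six difference quotients
of its four values, and each of them is attained by a pair of points.
-/

lemma dC_eq_inv_two_pow {x y : Cantor} {m : ℕ} (hm : x m ≠ y m) (hlt : ∀ k < m, x k = y k) :
    dC x y = 2⁻¹ ^ m := by
  have hxy : x ≠ y := fun h => hm (congrFun h m)
  rw [dC, dif_neg hxy, firstDiff]
  congr 1
  rw [Nat.find_eq_iff]
  exact ⟨hm, fun k hk h => h (hlt k hk)⟩

lemma dC_eq_one {x y : Cantor} (h : x 0 ≠ y 0) : dC x y = 1 := by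
  simpa using dC_eq_inv_two_pow h (by simp)

lemma dC_eq_inv_two {x y : Cantor} (h₀ : x 0 = y 0) (h₁ : x 1 ≠ y 1) : dC x y = 2⁻¹ := by
  simpa using dC_eq_inv_two_pow h₁ (by simpa using h₀)

lemma ENNReal.ofReal_div_inv_two (r : ℝ) : ENNReal.ofReal r / 2⁻¹ = ENNReal.ofReal (2 * r) := by
  rw [div_eq_mul_inv, inv_inv, mul_comm, ENNReal.ofReal_mul zero_le_two, ENNReal.ofReal_ofNat]

lemma le_LipC (f : Cantor → ℂ) {x y : Cantor} (h : x ≠ y) :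
    ENNReal.ofReal ‖f x - f y‖ / dC x y ≤ LipC f :=
  le_iSup₂_of_le x y (le_iSup_of_le h le_rfl)

lemma ofReal_norm_sub_le_LipC (f : Cantor → ℂ) {x y : Cantor} (h : x 0 ≠ y 0) :
    ENNReal.ofReal ‖f x - f y‖ ≤ LipC f := by
  simpa [dC_eq_one h] using le_LipC f (x := x) (y := y) fun e => h (congrFun e 0)

lemma ofReal_two_mul_norm_sub_le_LipC (f : Cantor → ℂ) {x y : Cantor} (h₀ : x 0 = y 0)
    (h₁ : x 1 ≠ y 1) : ENNReal.ofReal (2 * ‖f x - f y‖) ≤ LipC f := by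
  have := le_LipC f (x := x) (y := y) fun e => h₁ (congrFun e 1)
  rwa [dC_eq_inv_two h₀ h₁, ENNReal.ofReal_div_inv_two] at this

noncomputable def lipBound₂ (g : Fin 2 → Fin 2 → ℂ) : ℝ :=
  max (max (max ‖g 1 0 - g 0 0‖ ‖g 1 0 - g 0 1‖) (max ‖g 1 1 - g 0 0‖ ‖g 1 1 - g 0 1‖))
    (max (2 * ‖g 0 1 - g 0 0‖) (2 * ‖g 1 1 - g 1 0‖))

lemma norm_sub_le_lipBound₂ (g : Fin 2 → Fin 2 → ℂ) {a a' : Fin 2} (h : a ≠ a') (b b' : Fin 2) :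
    ‖g a b - g a' b'‖ ≤ lipBound₂ g := by
  fin_cases a <;> fin_cases a' <;> fin_cases b <;> fin_cases b' <;>
    simp_all [lipBound₂, norm_sub_rev]

lemma two_mul_norm_sub_le_lipBound₂ (g : Fin 2 → Fin 2 → ℂ) (a : Fin 2) {b b' : Fin 2}
    (h : b ≠ b') : 2 * ‖g a b - g a b'‖ ≤ lipBound₂ g := by
  fin_cases a <;> fin_cases b <;> fin_cases b' <;> simp_all [lipBound₂, norm_sub_rev]

theorem LipC_comp_eval_zero_one (g : Fin 2 → Fin 2 → ℂ) :
    LipC (fun x => g (x 0) (x 1)) = ENNReal.ofReal (lipBound₂ g) := by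
  apply le_antisymm
  · refine iSup₂_le fun x y => iSup_le fun _ => ?_
    beta_reduce
    by_cases h₀ : x 0 = y 0
    · by_cases h₁ : x 1 = y 1
      · simp [h₀, h₁]
      · rw [dC_eq_inv_two h₀ h₁, h₀, ENNReal.ofReal_div_inv_two]
        exact ENNReal.ofReal_le_ofReal (two_mul_norm_sub_le_lipBound₂ g _ h₁)
    · rw [dC_eq_one h₀, div_one]
      exact ENNReal.ofReal_le_ofReal (norm_sub_le_lipBound₂ g h₀ _ _)
  · let p : Fin 2 → Fin 2 → Cantor := fun a b n => if n = 0 then a else b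
    have across (a b a' b' : Fin 2) (h : a ≠ a') :
        ENNReal.ofReal ‖g a b - g a' b'‖ ≤ LipC (fun x => g (x 0) (x 1)) :=
      ofReal_norm_sub_le_LipC (fun x => g (x 0) (x 1)) (x := p a b) (y := p a' b') h
    have within (a b b' : Fin 2) (h : b ≠ b') :
        ENNReal.ofReal (2 * ‖g a b - g a b'‖) ≤ LipC (fun x => g (x 0) (x 1)) :=
      ofReal_two_mul_norm_sub_le_LipC (fun x => g (x 0) (x 1)) (x := p a b) (y := p a b') rfl h
    simp only [lipBound₂, ENNReal.ofReal_max]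
    refine max_le (max_le (max_le ?_ ?_) (max_le ?_ ?_)) (max_le ?_ ?_) <;>
      first | exact across _ _ _ _ (by decide) | exact within _ _ _ (by decide)

theorem lip_A2_formula (α₀ α₁ α₂ : ℂ) :
    LipC (fun x => α₀ * u 0 x + α₁ * u 1 x + α₂ * (u 0 x * u 1 x)) =
      ENNReal.ofReal
        (max (max (max (2 * ‖α₀ - α₂‖) (2 * ‖α₀ - α₁‖))
          (max (2 * ‖α₀ + α₁‖) (2 * ‖α₀ + α₂‖)))
          (max (4 * ‖α₁ - α₂‖) (4 * ‖α₁ + α₂‖))) := by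
  let s : Fin 2 → ℂ := fun a => 2 * (a : ℕ) - 1
  let g : Fin 2 → Fin 2 → ℂ := fun a b => α₀ * s a + α₁ * s b + α₂ * (s a * s b)
  have hs : s 0 = -1 ∧ s 1 = 1 := by norm_num [s]
  change LipC (fun x => g (x 0) (x 1)) = _
  rw [LipC_comp_eval_zero_one]
  congr 1
  have h₁₀ : g 1 0 - g 0 0 = 2 * (α₀ - α₂) := by simp only [g, hs]; ring
  have h₁₀' : g 1 0 - g 0 1 = 2 * (α₀ - α₁) := by simp only [g, hs]; ring
  have h₁₁ : g 1 1 - g 0 0 = 2 * (α₀ + α₁) := by simp only [g, hs]; ring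
  have h₁₁' : g 1 1 - g 0 1 = 2 * (α₀ + α₂) := by simp only [g, hs]; ring
  have h₀ : g 0 1 - g 0 0 = 2 * (α₁ - α₂) := by simp only [g, hs]; ring
  have h₁ : g 1 1 - g 1 0 = 2 * (α₁ + α₂) := by simp only [g, hs]; ring
  simp only [lipBound₂, h₁₀, h₁₀', h₁₁, h₁₁', h₀, h₁, norm_mul, Complex.norm_two, ← mul_assoc]
  norm_num
end
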